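/- No-cloning from QFI additivity: there is no θ-independent unitary U on H⊗H such that U(|ψ(θ)⟩⊗|0⟩) = |ψ(θ)⟩⊗|ψ(θ)⟩ for all θ in an open interval, for any smooth family of pure states |ψ(θ)⟩ with nonvanishing pure-state QFI F(θ) = 4(⟨∂_θψ|∂_θψ⟩ − |⟨ψ|∂_θψ⟩|²) > 0, since QFI is unitarily invariant and additive on product states, which would force F = 2F. -/

import Mathlib

noncomputable section

/-- The tensor product of two vectors of `ℂⁿ`, realized in `EuclideanSpace ℂ (Fin n × Fin n)`. -/
def tensor {n : ℕ} (x y : EuclideanSpace ℂ (Fin n)) :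
    EuclideanSpace ℂ (Fin n × Fin n) :=
  (WithLp.equiv 2 (Fin n × Fin n → ℂ)).symm (fun p => x p.1 * y p.2)

lemma tensor_apply {n : ℕ} (x y : EuclideanSpace ℂ (Fin n)) (p : Fin n × Fin n) :
    tensor x y p = x p.1 * y p.2 := rfl

lemma inner_tensor {n : ℕ} (a b c d : EuclideanSpace ℂ (Fin n)) :
    inner (𝕜 := ℂ) (tensor a b) (tensor c d)
      = inner (𝕜 := ℂ) a c * inner (𝕜 := ℂ) b d := by
  simp only [PiLp.inner_apply, RCLike.inner_apply, tensor_apply]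
  rw [Finset.sum_mul_sum]
  rw [← Finset.sum_product']
  simp [Fintype.sum_prod_type, map_mul]
  congr 1; ext p; congr 1; ext q; ring

lemma norm_tensor {n : ℕ} (x y : EuclideanSpace ℂ (Fin n)) :
    ‖tensor x y‖ = ‖x‖ * ‖y‖ := by
  have h := inner_tensor x y x y
  rw [inner_self_eq_norm_sq_to_K, inner_self_eq_norm_sq_to_K,
      inner_self_eq_norm_sq_to_K] at h
  have h2 : (‖tensor x y‖ : ℝ) ^ 2 = (‖x‖ * ‖y‖) ^ 2 := by
    have := congrArg Complex.re h
    simp [mul_pow, ← Complex.ofReal_pow, ← Complex.ofReal_mul] at this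
    linarith
  nlinarith [norm_nonneg (tensor x y), norm_nonneg x, norm_nonneg y,
    mul_nonneg (norm_nonneg x) (norm_nonneg y)]

def tensorL (n : ℕ) : EuclideanSpace ℂ (Fin n) →ₗ[ℝ] EuclideanSpace ℂ (Fin n)
    →ₗ[ℝ] EuclideanSpace ℂ (Fin n × Fin n) :=
  LinearMap.mk₂ ℝ tensor
    (fun x x' y => by ext p; simp [tensor_apply, add_mul])
    (fun c x y => by ext p; simp [tensor_apply]; ring)
    (fun x y y' => by ext p; simp [tensor_apply, mul_add])
    (fun c x y => by ext p; simp [tensor_apply]; ring)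

def tensorCLM (n : ℕ) : EuclideanSpace ℂ (Fin n) →L[ℝ] EuclideanSpace ℂ (Fin n)
    →L[ℝ] EuclideanSpace ℂ (Fin n × Fin n) :=
  LinearMap.mkContinuous₂ (tensorL n) 1 (fun x y => by
    simp [tensorL, norm_tensor])

@[simp] lemma tensorCLM_apply {n : ℕ} (x y : EuclideanSpace ℂ (Fin n)) :
    tensorCLM n x y = tensor x y := rfl


/-- No-cloning from QFI additivity: there is no θ-independent unitary `U` on `H ⊗ H`
cloning a smooth family of pure states `ψ(θ)` with strictly positive pure-state
quantum Fisher information `F(θ₀) = 4(‖∂_θψ‖² − |⟨ψ,∂_θψ⟩|²) > 0`, since the QFI is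
unitarily invariant and additive on products, which would force `F = 2F`. -/
theorem no_cloning_of_qfi {n : ℕ}
    (ψ : ℝ → EuclideanSpace ℂ (Fin n)) (ψ0 : EuclideanSpace ℂ (Fin n))
    (U : EuclideanSpace ℂ (Fin n × Fin n) ≃ₗᵢ[ℂ] EuclideanSpace ℂ (Fin n × Fin n))
    (a b θ₀ : ℝ) (hab : a < θ₀ ∧ θ₀ < b)
    (hsmooth : ContDiff ℝ (⊤ : ℕ∞) ψ)
    (hunit : ∀ θ, ‖ψ θ‖ = 1) (hψ0 : ‖ψ0‖ = 1)
    (hF : 0 < 4 * (‖deriv ψ θ₀‖ ^ 2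
      - ‖inner (𝕜 := ℂ) (ψ θ₀) (deriv ψ θ₀)‖ ^ 2))
    (hclone : ∀ θ ∈ Set.Ioo a b, U (tensor (ψ θ) ψ0) = tensor (ψ θ) (ψ θ)) :
    False := by
  obtain ⟨ha, hb⟩ := hab
  set d := deriv ψ θ₀ with hd
  have hψd : HasDerivAt ψ d θ₀ :=
    ((hsmooth.differentiable (by simp)).differentiableAt).hasDerivAt
  have h1 : HasDerivAt (fun θ => tensor (ψ θ) ψ0) (tensor d ψ0) θ₀ := by
    have := ((tensorCLM n).flip ψ0).hasFDerivAt.comp_hasDerivAt θ₀ hψd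
    exact this
  have hU : HasDerivAt (fun θ => U (tensor (ψ θ) ψ0)) (U (tensor d ψ0)) θ₀ := by
    have := ((U.toLinearIsometry.toContinuousLinearMap).restrictScalars
      ℝ).hasFDerivAt.comp_hasDerivAt θ₀ h1
    exact this
  have h2 : HasDerivAt (fun θ => tensor (ψ θ) (ψ θ))
      (tensor d (ψ θ₀) + tensor (ψ θ₀) d) θ₀ := by
    have hc : HasDerivAt (fun θ => tensorCLM n (ψ θ)) (tensorCLM n d) θ₀ := by
      have := (tensorCLM n).hasFDerivAt.comp_hasDerivAt θ₀ hψd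
      exact this
    have := hc.clm_apply hψd
    simpa using this
  have hEq : (fun θ => U (tensor (ψ θ) ψ0)) =ᶠ[nhds θ₀] fun θ => tensor (ψ θ) (ψ θ) := by
    filter_upwards [Ioo_mem_nhds ha hb] with θ hθ using hclone θ hθ
  have key : U (tensor d ψ0) = tensor d (ψ θ₀) + tensor (ψ θ₀) d :=
    (hU.congr_of_eventuallyEq hEq.symm).unique h2
  set c : ℂ := inner (𝕜 := ℂ) (ψ θ₀) d with hc
  have hC := congrArg (fun v => (inner (𝕜 := ℂ) v v : ℂ)) key
  simp only [LinearIsometryEquiv.inner_map_map, inner_add_left, inner_add_right,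
    inner_tensor] at hC
  rw [inner_self_eq_norm_sq_to_K, inner_self_eq_norm_sq_to_K,
    inner_self_eq_norm_sq_to_K, hψ0, hunit θ₀, ← inner_conj_symm (𝕜 := ℂ) d (ψ θ₀),
    ← hc] at hC
  have hre := congrArg Complex.re hC
  simp [Complex.mul_conj, Complex.conj_mul', ← Complex.ofReal_pow, Complex.add_re] at hre
  have habs : Complex.normSq c = ‖c‖ ^ 2 := (Complex.sq_norm c).symm
  nlinarith [Complex.normSq_nonneg c, sq_nonneg ‖c‖]

end
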